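/- Let G be a planar ribbon graph such that G and its planar dual G* are both loopless, and let T and T' be spanning trees of G. Then φ(∠(T, T')) = ∠(T*, T'*) in Jac(G*), where T* = δ(T) and T'* = δ(T') are the dual spanning trees, ∠(T,T') denotes the angle between T and T' computed at any root vertex (which is well defined for planar ribbon graphs), and similarly for ∠(T*, T'*). -/

import Mathlib

attribute [local instance 10] Classical.propDecidable

/-- A finite multigraph, presented by darts (oriented edges): `rev` is the
fixed-point-free involution exchanging the two darts of each edge, and
`head d` is the vertex the dart `d` points to. -/
structure Multigraph where
  V : Type
  D : Type
  fV : Fintype V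
  dV : DecidableEq V
  fD : Fintype D
  dD : DecidableEq D
  rev : D → D
  rev_invol : Function.Involutive rev
  rev_ne : ∀ d : D, rev d ≠ d
  head : D → V

attribute [instance] Multigraph.fV Multigraph.dV Multigraph.fD Multigraph.dD

namespace Multigraph

variable (G : Multigraph)

/-- The tail (starting vertex) of a dart. -/
def tail (d : G.D) : G.V := G.head (G.rev d)

/-- `G` is loopless: no edge has equal endpoints. -/
def Loopless : Prop := ∀ d : G.D, G.head d ≠ G.tail d

/-- One-step adjacency between vertices. -/
def Adj (u v : G.V) : Prop := ∃ d : G.D, G.tail d = u ∧ G.head d = v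

/-- `G` is connected. -/
def Connected : Prop := ∀ u v : G.V, Relation.ReflTransGen G.Adj u v

/-- The degree of a vertex: the number of darts with tail `v`. -/
def degree (v : G.V) : ℕ := (Finset.univ.filter fun d : G.D => G.tail d = v).card

/-- The number of edges joining `v` to `w`. -/
def mul (v w : G.V) : ℕ :=
  (Finset.univ.filter fun d : G.D => G.tail d = v ∧ G.head d = w).card

/-! ### Divisors and the sandpile group -/

/-- The total degree homomorphism on divisors. -/
def degHom : (G.V → ℤ) →+ ℤ where
  toFun x := ∑ v, x v
  map_zero' := by simp
  map_add' x y := by simp [Finset.sum_add_distrib]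

/-- Degree-zero divisors. -/
def Div0 : AddSubgroup (G.V → ℤ) := G.degHom.ker

/-- The principal divisor of a lending move at `v`: `v` loses `deg v` chips and
each other vertex `w` gains `n(v,w)` chips. -/
def prin (v : G.V) : G.V → ℤ :=
  fun w => if w = v then -(G.degree v : ℤ) else (G.mul v w : ℤ)

/-- The subgroup of `ℤV` generated by all lending moves. -/
def Prin : AddSubgroup (G.V → ℤ) := AddSubgroup.closure (Set.range G.prin)

/-- Two divisors are linearly equivalent when they differ by a sequence of
lending moves. -/
def LinEquiv (D D' : G.V → ℤ) : Prop := D' - D ∈ G.Prin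

/-- The sandpile group (Jacobian) of `G`: degree-zero divisors modulo
linear equivalence. -/
def Jac := G.Div0 ⧸ (G.Prin.addSubgroupOf G.Div0)

instance : AddCommGroup G.Jac :=
  inferInstanceAs (AddCommGroup (G.Div0 ⧸ (G.Prin.addSubgroupOf G.Div0)))

/-- The divisor class of a degree-zero divisor in the sandpile group. -/
def divClass (D : G.Div0) : G.Jac := QuotientAddGroup.mk D

/-- The divisor `a - b` for vertices `a`, `b`. -/
def unitDivFun (a b : G.V) : G.V → ℤ :=
  fun w => (if w = a then 1 else 0) - (if w = b then 1 else 0)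

lemma unitDivFun_mem (a b : G.V) : G.unitDivFun a b ∈ G.Div0 := by
  simp [Div0, degHom, AddMonoidHom.mem_ker, unitDivFun, Finset.sum_sub_distrib]

/-- The divisor `a - b` as a degree-zero divisor. -/
def unitDiv (a b : G.V) : G.Div0 := ⟨G.unitDivFun a b, G.unitDivFun_mem a b⟩

/-- The class `[a - b] ∈ Jac(G)`. -/
def unitClass (a b : G.V) : G.Jac := G.divClass (G.unitDiv a b)

/-- The boundary of a dart: `∂ d = [d⁺ - d⁻] ∈ Jac(G)`. -/
def dartBoundary (d : G.D) : G.Jac := G.unitClass (G.head d) (G.tail d)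

/-! ### The group ℤE of formal sums of oriented edges -/

/-- `ℤE`: functions on darts that are antisymmetric under reversal;
this is the free abelian group on the oriented edges, with `-e` identified
with the oppositely oriented edge. -/
def EdgeGroup : AddSubgroup (G.D → ℤ) where
  carrier := {x | ∀ d, x (G.rev d) = -x d}
  add_mem' := by
    intro a b ha hb d
    simp only [Pi.add_apply, ha d, hb d]
    ring
  zero_mem' := by intro d; simp
  neg_mem' := by
    intro a ha d
    simp only [Pi.neg_apply, ha d]

/-- The element of `ℤE` corresponding to a single oriented edge (dart). -/
def dartVec (d : G.D) : G.D → ℤ :=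
  fun d' => if d' = d then 1 else if d' = G.rev d then -1 else 0

lemma dartVec_mem (d : G.D) : G.dartVec d ∈ G.EdgeGroup := by
  have hinj := G.rev_invol.injective
  intro d'
  unfold dartVec
  rcases eq_or_ne d' d with rfl | h1
  · simp [G.rev_ne d']
  · rcases eq_or_ne d' (G.rev d) with rfl | h2
    · simp [G.rev_invol d, G.rev_ne d]
    · have h3 : G.rev d' ≠ d := fun h => h2 (by rw [← h, G.rev_invol])
      have h4 : G.rev d' ≠ G.rev d := fun h => h1 (hinj h)
      simp [h1, h2, h3, h4]

/-- The vector of a list of darts (e.g. of a directed cycle). -/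
def listVec (l : List G.D) : G.D → ℤ := (l.map G.dartVec).sum

/-- `l` is a directed cycle: a nonempty closed walk of darts through
pairwise distinct vertices. -/
def IsDirCycle (l : List G.D) : Prop :=
  l ≠ [] ∧ l.Chain' (fun a b => G.head a = G.tail b) ∧
    (∀ a ∈ l.getLast?, ∀ b ∈ l.head?, G.head a = G.tail b) ∧
    (l.map G.tail).Nodup

/-- The integral cycle space `𝒞 ⊆ ℤE`. -/
def CycleSpace : AddSubgroup (G.D → ℤ) :=
  AddSubgroup.closure {x | ∃ l : List G.D, G.IsDirCycle l ∧ x = G.listVec l}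

/-- The cut determined by a set `U` of vertices, directed out of `U`. -/
def cutVec (U : Finset G.V) : G.D → ℤ := fun d =>
  if G.tail d ∈ U ∧ G.head d ∉ U then 1
  else if G.head d ∈ U ∧ G.tail d ∉ U then -1 else 0

/-- The integral cut space `𝒞* ⊆ ℤE`. -/
def CutSpace : AddSubgroup (G.D → ℤ) :=
  AddSubgroup.closure (Set.range G.cutVec)

/-- `ℰ(G) = ℤE / (𝒞 + 𝒞*)`. -/
def EGroup :=
  G.EdgeGroup ⧸ ((G.CycleSpace ⊔ G.CutSpace).addSubgroupOf G.EdgeGroup)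

instance : AddCommGroup G.EGroup :=
  inferInstanceAs
    (AddCommGroup (G.EdgeGroup ⧸ ((G.CycleSpace ⊔ G.CutSpace).addSubgroupOf G.EdgeGroup)))

/-- The class of an oriented edge in `ℰ(G)`. -/
def eClass (d : G.D) : G.EGroup :=
  QuotientAddGroup.mk ⟨G.dartVec d, G.dartVec_mem d⟩

/-- The boundary map `ℤE → ℤV`, sending an oriented edge `e` to `e⁺ - e⁻`
(when restricted to `ℤE ⊆ (D → ℤ)`). -/
def bMap : (G.D → ℤ) →+ (G.V → ℤ) where
  toFun x := fun v => ∑ d ∈ Finset.univ.filter (fun d => G.head d = v), x d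
  map_zero' := by funext v; simp
  map_add' x y := by funext v; simp [Finset.sum_add_distrib]

/-! ### Spanning trees -/

/-- Adjacency using only darts in `T`. -/
def treeAdj (T : Finset G.D) (u v : G.V) : Prop :=
  ∃ d ∈ T, G.tail d = u ∧ G.head d = v

/-- `T` (a reversal-closed set of darts) is a spanning tree: it is connected,
meets every vertex, and has exactly `|V| - 1` edges (hence is acyclic). -/
def IsSpanningTree (T : Finset G.D) : Prop :=
  (∀ d ∈ T, G.rev d ∈ T) ∧
    (∀ u v : G.V, Relation.ReflTransGen (G.treeAdj T) u v) ∧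
    T.card = 2 * (Fintype.card G.V - 1)

/-- The reversal involution as a permutation of darts. -/
def revPerm : Equiv.Perm G.D := Function.Involutive.toPerm G.rev G.rev_invol

end Multigraph

/-- A ribbon graph: a multigraph together with, at each vertex, a cyclic
ordering of the incident edges (darts).  `next d` is the dart following `d`
in the cyclic order at the tail of `d`. -/
structure RibbonGraph extends Multigraph where
  next : Equiv.Perm toMultigraph.D
  next_tail : ∀ d : toMultigraph.D, toMultigraph.tail (next d) = toMultigraph.tail d
  next_cyclic : ∀ d d' : toMultigraph.D,
    toMultigraph.tail d = toMultigraph.tail d' → next.SameCycle d d'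

namespace RibbonGraph

variable (G : RibbonGraph)

/-- The face permutation of a ribbon graph; its orbits are the faces of the
associated surface embedding (the orbit of a dart `d` is the face to the left
of `d`, when the cyclic orders are taken clockwise). -/
def facePerm : Equiv.Perm G.D := G.next * G.revPerm

/-- Darts lie in the same face when they are in the same orbit of the face
permutation. -/
def faceSetoid : Setoid G.D :=
  ⟨G.facePerm.SameCycle,
    ⟨fun x => Equiv.Perm.SameCycle.refl _ x, fun h => h.symm, fun h h' => h.trans h'⟩⟩

/-- The faces of the surface embedding determined by the ribbon structure. -/
def Faces := Quotient G.faceSetoid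

instance : Fintype G.Faces :=
  @Quotient.fintype _ _ G.faceSetoid
    (fun a b => inferInstanceAs (Decidable (G.facePerm.SameCycle a b)))

/-- The face to the left of a dart. -/
def leftFace (d : G.D) : G.Faces := Quotient.mk G.faceSetoid d

/-- The face to the right of a dart. -/
def rightFace (d : G.D) : G.Faces := G.leftFace (G.rev d)

/-- `G` is a planar ribbon graph: the surface it embeds in has genus `0`,
i.e. Euler's formula `|V| - |E| + |F| = 2` holds. -/
def IsPlanar : Prop :=
  Fintype.card G.V + Fintype.card G.Faces = Fintype.card G.D / 2 + 2

/-! ### Rotor-routing -/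

/-- A rotor configuration with basepoint `q`: a choice, for each vertex
`v ≠ q`, of a dart with tail `v`. -/
def RotorConfig (q : G.V) :=
  {ρ : (v : G.V) → v ≠ q → G.D // ∀ (v : G.V) (h : v ≠ q), G.tail (ρ v h) = v}

/-- Firing the vertex `v ≠ q` in a state (chip configuration, rotor
configuration): the rotor at `v` advances to the next dart in the cyclic
order at `v`, and one chip moves from `v` to the head of the new rotor. -/
def fire (q : G.V) (v : G.V) (hv : v ≠ q) (s : (G.V → ℤ) × G.RotorConfig q) :
    (G.V → ℤ) × G.RotorConfig q :=
  ((fun w => s.1 w - (if w = v then 1 else 0) +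
      (if w = G.head (G.next (s.2.1 v hv)) then 1 else 0)),
   ⟨fun u hu => if u = v then G.next (s.2.1 v hv) else s.2.1 u hu, by
      intro u hu
      by_cases h : u = v
      · simp only [if_pos h]
        rw [G.next_tail, s.2.2 v hv, h]
      · simp only [if_neg h]
        exact s.2.2 u hu⟩)

/-- A single legal rotor-routing step: fire some vertex `v ≠ q` carrying at
least one chip. -/
def Step (q : G.V) (s s' : (G.V → ℤ) × G.RotorConfig q) : Prop :=
  ∃ (v : G.V) (hv : v ≠ q), 1 ≤ s.1 v ∧ s' = G.fire q v hv s

/-- A state is terminal when no vertex other than `q` can be fired. -/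
def Terminal (q : G.V) (s : (G.V → ℤ) × G.RotorConfig q) : Prop :=
  ∀ v : G.V, v ≠ q → s.1 v ≤ 0

/-- `ρ` is the rotor configuration obtained by orienting the spanning tree
`T` towards the root `q`: every rotor is a dart of `T`, and following the
rotors from any vertex leads to `q`. -/
def TowardRoot (q : G.V) (T : Finset G.D) (ρ : G.RotorConfig q) : Prop :=
  ∀ (v : G.V) (h : v ≠ q), ρ.1 v h ∈ T ∧
    Relation.ReflTransGen (fun a b => ∃ ha : a ≠ q, G.head (ρ.1 a ha) = b) v q

/-- The rotor-routing process started from a representative of `x` that is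
nonnegative away from `q` and from the rotor configuration of `T` oriented
towards `q` terminates at the rotor configuration of `T'` oriented towards
`q`. -/
def ActsTo (q : G.V) (x : G.Jac) (T T' : Finset G.D) : Prop :=
  ∃ D : G.Div0, G.divClass D = x ∧ (∀ v : G.V, v ≠ q → 0 ≤ (D : G.V → ℤ) v) ∧
    ∃ (ρ ρ' : G.RotorConfig q) (c' : G.V → ℤ),
      G.TowardRoot q T ρ ∧ G.TowardRoot q T' ρ' ∧
      Relation.ReflTransGen (G.Step q) ((D : G.V → ℤ), ρ) (c', ρ') ∧
      G.Terminal q (c', ρ')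

/-- The rotor-routing action of the sandpile group element `x` on the
spanning tree `T`, with basepoint `q`. -/
noncomputable def rotorAction (q : G.V) (x : G.Jac) (T : Finset G.D) :
    Finset G.D :=
  if h : ∃ T' : Finset G.D, G.IsSpanningTree T' ∧ G.ActsTo q x T T' then
    h.choose
  else T

/-! ### Angles -/

/-- The angle `∠ᵘ(d, d')` between two darts with the same tail `u`:
if `d = e₀, e₁, …, e_k = d'` are the consecutive darts in the cyclic order
at `u`, the angle is `∑_{i=1}^{k} ∂ eᵢ ∈ Jac(G)`. -/
noncomputable def dartAngle (d d' : G.D) : G.Jac :=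
  if h : ∃ k : ℕ, (⇑G.next)^[k] d = d' then
    ∑ i ∈ Finset.range (Nat.find h), G.dartBoundary ((⇑G.next)^[i + 1] d)
  else 0

/-- The angle `∠_v(T, T')` between two spanning trees `T, T'` based at `v`:
the sum over all vertices `u ≠ v` of the angles between the rotors of `T`
and of `T'` at `u` (both oriented towards `v`). -/
noncomputable def treeAngle (v : G.V) (T T' : Finset G.D) : G.Jac :=
  if h : ∃ p : G.RotorConfig v × G.RotorConfig v,
      G.TowardRoot v T p.1 ∧ G.TowardRoot v T' p.2 then
    ∑ u : G.V,
      if hu : u = v then 0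
      else G.dartAngle (h.choose.1.1 u hu) (h.choose.2.1 u hu)
  else 0


/-! ### The planar dual ribbon graph -/

/-- The dual ribbon graph `G*` of a ribbon graph `G`: its vertices are the
faces of `G`, its darts are the darts of `G`, where the dart `d`, viewed in
the dual, crosses `d` from the face after `d` (its right, its dual tail) to
the face before `d` (its left, its dual head), and the cyclic orders at the
faces are the counter-clockwise ones. -/
noncomputable def dual : RibbonGraph where
  V := G.Faces
  D := G.D
  fV := inferInstance
  dV := Classical.decEq _
  fD := G.fD
  dD := G.dD
  rev := G.rev
  rev_invol := G.rev_invol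
  rev_ne := G.rev_ne
  head := fun d => G.leftFace d
  next := G.revPerm * G.facePerm * G.revPerm
  next_tail := by
    intro d
    show G.leftFace (G.rev (G.rev (G.facePerm (G.rev d)))) = G.leftFace (G.rev d)
    rw [G.rev_invol]
    exact Quotient.sound ⟨-1, by simp⟩
  next_cyclic := by
    intro d d' h
    have h1 : G.facePerm.SameCycle (G.rev d) (G.rev d') := Quotient.exact h
    have h2 := h1.conj (g := G.revPerm)
    have hR : G.revPerm⁻¹ = G.revPerm := by
      rw [Equiv.Perm.inv_def]
      exact Function.Involutive.toPerm_symm G.rev_invol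
    rw [hR] at h2
    have e1 : G.revPerm (G.rev d) = d := G.rev_invol d
    have e2 : G.revPerm (G.rev d') = d' := G.rev_invol d'
    rw [e1, e2] at h2
    exact h2


end RibbonGraph

/-!
Let `∂*e = [left e - right e] ∈ Jac(G*)` be the boundary of the dual of `e`, so `φ ∂e = ∂*e`.
Consecutive darts `e, next e` around a vertex share a face, `left (next e) = right e`; hence
the sum defining an angle telescopes: `φ ∠ᵘ(d, d') = [right d - right d']`, and dually
`∠ᶠ(c, c') = φ [tail c - tail c']`.

The edges of `T` and of `T* = Tᶜ` partition `E`, and a spanning tree oriented towards its root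
uses each of its edges exactly once, so the rotors of `T` at `v` together with the rotors of `T*`
at `w` choose exactly one dart of every edge. The quantity `μ d = [right d - w] - φ [tail d - v]`
does not change when `d` is reversed (this is `φ ∂d = ∂*d`), so its sum over such a choice does
not depend on the choice. Comparing the choices coming from `T` and from `T'` gives the theorem.

That `Tᶜ` is a spanning tree of `G*` follows from Euler's formula for its size; it is connected
because the darts of `T` separating the faces reachable from `w` from the others would form an
infinite non-backtracking walk in the tree `T`.
-/

lemma Relation.ReflTransGen.exists_exit {α : Type*} {r : α → α → Prop} {P : α → Prop}
    {a b : α} (h : Relation.ReflTransGen r a b) (ha : P a) (hb : ¬P b) :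
    ∃ x y, r x y ∧ P x ∧ ¬P y := by
  induction h with
  | refl => exact absurd ha hb
  | @tail c _ _ hcb ih => exact (em (P c)).elim (fun hc => ⟨c, _, hcb, hc, hb⟩) ih

lemma Relation.exists_rank_of_forall_reflTransGen {α : Type*} {r : α → α → Prop} {q : α}
    (h : ∀ a, Relation.ReflTransGen r a q) :
    ∃ rank : α → ℕ, ∀ a, a ≠ q → ∃ b, r a b ∧ rank b < rank a := by
  classical
  let ball : ℕ → Set α := fun n => (fun S => S ∪ {a | ∃ b ∈ S, r a b})^[n] {q}
  have hball : ∀ a, ∃ n, a ∈ ball n := fun a => by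
    induction h a using Relation.ReflTransGen.head_induction_on with
    | refl => exact ⟨0, rfl⟩
    | head hab _ ih =>
      obtain ⟨n, hn⟩ := ih
      exact ⟨n + 1, by simp only [ball, Function.iterate_succ_apply']; exact Or.inr ⟨_, hn, hab⟩⟩
  refine ⟨fun a => Nat.find (hball a), fun a ha => ?_⟩
  dsimp only
  obtain ⟨n, hn⟩ : ∃ n, Nat.find (hball a) = n + 1 :=
    Nat.exists_eq_succ_of_ne_zero fun h0 => ha (by simpa [h0, ball] using Nat.find_spec (hball a))
  have hmem := Nat.find_spec (hball a)
  simp only [ball, hn, Function.iterate_succ_apply'] at hmem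
  rcases hmem with hmem | ⟨b, hb, hab⟩
  · exact absurd (Nat.find_min' (hball a) hmem) (by omega)
  · exact ⟨b, hab, (Nat.find_min' (hball b) hb).trans_lt (by omega)⟩

lemma Function.Involutive.sum_transversal_eq {α M : Type*} [DecidableEq α] [AddCommMonoid M]
    {rev : α → α} (hrev : Function.Involutive rev) {μ : α → M} (hμ : ∀ a, μ (rev a) = μ a)
    {O O' : Finset α} (hO : ∀ a, a ∈ O ↔ rev a ∉ O) (hO' : ∀ a, a ∈ O' ↔ rev a ∉ O') :
    ∑ a ∈ O, μ a = ∑ a ∈ O', μ a := by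
  refine Finset.sum_nbij' (fun a => if a ∈ O' then a else rev a)
    (fun a => if a ∈ O then a else rev a) ?_ ?_ ?_ ?_ ?_
  all_goals
    intro a ha
    have := hrev a
    grind

lemma Function.Involutive.even_card {α : Type*} [Fintype α] {f : α → α}
    (hf : Function.Involutive f) (hfix : ∀ a, f a ≠ a) : Even (Fintype.card α) := by
  classical
  have h := Equiv.Perm.card_fixedPoints_modEq (α := α) (f := f) (p := 2) (n := 1)
    (by funext a; exact hf a)
  have : Fintype.card (Function.fixedPoints f) = 0 := by
    simp [Function.fixedPoints, Function.IsFixedPt, hfix]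
  rw [this] at h
  exact Nat.even_iff.2 h

namespace Multigraph

variable {G : Multigraph}

lemma tail_rev (d : G.D) : G.tail (G.rev d) = G.head d :=
  congrArg G.head (G.rev_invol d)

lemma head_rev (d : G.D) : G.head (G.rev d) = G.tail d := rfl

lemma unitClass_add_unitClass (a b c : G.V) :
    G.unitClass a b + G.unitClass b c = G.unitClass a c := by
  show G.divClass (G.unitDiv a b + G.unitDiv b c) = G.divClass (G.unitDiv a c)
  congr 1
  ext x
  show G.unitDivFun a b x + G.unitDivFun b c x = G.unitDivFun a c x
  simp only [unitDivFun]
  ring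

@[simp] lemma unitClass_self (a : G.V) : G.unitClass a a = 0 := by
  simpa using unitClass_add_unitClass a a a

lemma unitClass_sub_unitClass (a b c : G.V) :
    G.unitClass a c - G.unitClass b c = G.unitClass a b := by
  rw [sub_eq_iff_eq_add, unitClass_add_unitClass]

lemma sum_range_unitClass (p : ℕ → G.V) (k : ℕ) :
    ∑ i ∈ Finset.range k, G.unitClass (p i) (p (i + 1)) = G.unitClass (p 0) (p k) := by
  induction k with
  | zero => simp
  | succ n ih => rw [Finset.sum_range_succ, ih, unitClass_add_unitClass]

end Multigraph

namespace RibbonGraph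

open Multigraph

variable {G : RibbonGraph}

lemma leftFace_next (d : G.D) : G.leftFace (G.next d) = G.rightFace d :=
  Quotient.sound ⟨-1, by
    rw [zpow_neg_one, Equiv.Perm.inv_eq_iff_eq]
    exact congrArg G.next (G.rev_invol d).symm⟩

lemma rightFace_rev (d : G.D) : G.rightFace (G.rev d) = G.leftFace d :=
  congrArg G.leftFace (G.rev_invol d)

lemma head_dual_next (d : G.D) : G.head (G.dual.next d) = G.tail d := by
  show G.tail (G.next (G.rev (G.rev d))) = G.tail d
  rw [G.next_tail, G.rev_invol]

lemma exists_iterate_next {d d' : G.D} (h : G.tail d = G.tail d') :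
    ∃ k, (⇑G.next)^[k] d = d' := by
  obtain ⟨k, -, hk⟩ := (G.next_cyclic d d' h).exists_pow_eq'
  exact ⟨k, by rw [Equiv.Perm.iterate_eq_pow, hk]⟩

lemma reflTransGen_next {d d' : G.D} (h : G.tail d = G.tail d') :
    Relation.ReflTransGen (fun x y => G.next x = y) d d' := by
  obtain ⟨k, rfl⟩ := exists_iterate_next h
  clear h
  induction k with
  | zero => exact .refl
  | succ k ih => exact ih.tail (Function.iterate_succ_apply' _ _ _).symm

lemma map_dartAngle {K : Multigraph} (ψ : G.Jac →+ K.Jac) (g : G.D → K.V)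
    (hψ : ∀ e, ψ (G.dartBoundary (G.next e)) = K.unitClass (g e) (g (G.next e)))
    {d d' : G.D} (h : G.tail d = G.tail d') :
    ψ (G.dartAngle d d') = K.unitClass (g d) (g d') := by
  have hex := exists_iterate_next h
  simp only [dartAngle, dif_pos hex, map_sum, Function.iterate_succ_apply', hψ]
  have telescope : ∀ k, (⇑G.next)^[k] d = d' → ∑ i ∈ Finset.range k,
      K.unitClass (g ((⇑G.next)^[i] d)) (g (G.next ((⇑G.next)^[i] d))) =
        K.unitClass (g d) (g d') := by
    rintro k rfl
    simpa only [Function.iterate_succ_apply', Function.iterate_zero_apply] using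
      sum_range_unitClass (fun i => g ((⇑G.next)^[i] d)) k
  exact telescope _ (Nat.find_spec (p := fun k => (⇑G.next)^[k] d = d') _)

lemma map_dartAngle_eq_unitClass_rightFace (φ : G.Jac ≃+ G.dual.Jac)
    (hφ : ∀ d : G.D, φ (G.dartBoundary d) = G.dual.dartBoundary d)
    {d d' : G.D} (h : G.tail d = G.tail d') :
    φ (G.dartAngle d d') = G.dual.unitClass (G.rightFace d) (G.rightFace d') :=
  map_dartAngle φ.toAddMonoidHom G.rightFace
    (fun e => (hφ _).trans (congrArg (G.dual.unitClass · _) (leftFace_next e))) h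

lemma dual_dartAngle_eq_map_unitClass_tail (φ : G.Jac ≃+ G.dual.Jac)
    (hφ : ∀ d : G.D, φ (G.dartBoundary d) = G.dual.dartBoundary d)
    {c c' : G.D} (h : G.dual.tail c = G.dual.tail c') :
    G.dual.dartAngle c c' = φ (G.unitClass (G.tail c) (G.tail c')) := by
  rw [← map_dartAngle φ.symm.toAddMonoidHom G.tail _ h]
  · exact (φ.apply_symm_apply _).symm
  · exact fun e => (φ.symm_apply_eq.2 (hφ _).symm).trans
      (congrArg (G.unitClass · _) (head_dual_next (G := G) e))

lemma exists_treeAngle_eq_sum {v : G.V} {T T' : Finset G.D}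
    (hT : ∃ ρ, G.TowardRoot v T ρ) (hT' : ∃ ρ', G.TowardRoot v T' ρ') :
    ∃ ρ ρ', G.TowardRoot v T ρ ∧ G.TowardRoot v T' ρ' ∧
      G.treeAngle v T T' = ∑ u : {u // u ≠ v}, G.dartAngle (ρ.1 u u.2) (ρ'.1 u u.2) := by
  have h : ∃ p : G.RotorConfig v × G.RotorConfig v,
      G.TowardRoot v T p.1 ∧ G.TowardRoot v T' p.2 :=
    ⟨(hT.choose, hT'.choose), hT.choose_spec, hT'.choose_spec⟩
  refine ⟨h.choose.1, h.choose.2, h.choose_spec.1, h.choose_spec.2, ?_⟩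
  rw [treeAngle, dif_pos h, ← Fintype.sum_subtype_add_sum_subtype (· = v),
    Finset.sum_eq_zero fun u _ => dif_pos u.2, zero_add]
  exact Finset.sum_congr rfl fun u _ => dif_neg u.2

lemma TowardRoot.exists_rank {q : G.V} {T : Finset G.D} {ρ : G.RotorConfig q}
    (hρ : G.TowardRoot q T ρ) :
    ∃ rank : G.V → ℕ, ∀ u (hu : u ≠ q), rank (G.head (ρ.1 u hu)) < rank u := by
  obtain ⟨rank, hrank⟩ := Relation.exists_rank_of_forall_reflTransGen fun u =>
    if hu : u = q then by rw [hu] else (hρ u hu).2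
  refine ⟨rank, fun u hu => ?_⟩
  obtain ⟨_, ⟨_, rfl⟩, hlt⟩ := hrank u hu
  exact hlt

lemma exists_towardRoot {q : G.V} {T : Finset G.D}
    (hT : ∀ u, Relation.ReflTransGen (G.treeAdj T) u q) :
    ∃ ρ : G.RotorConfig q, G.TowardRoot q T ρ := by
  obtain ⟨rank, hrank⟩ := Relation.exists_rank_of_forall_reflTransGen hT
  have hdart : ∀ u, u ≠ q → ∃ d ∈ T, G.tail d = u ∧ rank (G.head d) < rank u := fun u hu => by
    obtain ⟨_, ⟨d, hdT, hdu, rfl⟩, hlt⟩ := hrank u hu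
    exact ⟨d, hdT, hdu, hlt⟩
  choose ρ hρT hρtail hρrank using hdart
  refine ⟨⟨ρ, hρtail⟩, fun u hu => ⟨hρT u hu, ?_⟩⟩
  induction hr : rank u using Nat.strong_induction_on generalizing u with
  | _ n ih =>
    by_cases hq : G.head (ρ u hu) = q
    · exact .single ⟨hu, hq⟩
    · exact .head ⟨hu, rfl⟩ (ih _ (hr ▸ hρrank u hu) _ hq rfl)

noncomputable def rotorSet (G : RibbonGraph) {q : G.V} (ρ : G.RotorConfig q) : Finset G.D :=
  Finset.univ.image fun u : {u // u ≠ q} => ρ.1 u u.2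

lemma RotorConfig.injective {q : G.V} (ρ : G.RotorConfig q) :
    Function.Injective fun u : {u // u ≠ q} => ρ.1 u u.2 := by
  intro u u' h
  apply Subtype.ext
  rw [← ρ.2 u u.2, ← ρ.2 u' u'.2]
  exact congrArg G.tail h

lemma mem_rotorSet {q : G.V} {ρ : G.RotorConfig q} {d : G.D} :
    d ∈ G.rotorSet ρ ↔ ∃ (u : G.V) (hu : u ≠ q), ρ.1 u hu = d := by
  simp [rotorSet]

lemma sum_rotorSet {M : Type*} [AddCommMonoid M] {q : G.V} (ρ : G.RotorConfig q) (f : G.D → M) :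
    ∑ d ∈ G.rotorSet ρ, f d = ∑ u : {u // u ≠ q}, f (ρ.1 u u.2) :=
  Finset.sum_image ρ.injective.injOn

lemma card_rotorSet {q : G.V} (ρ : G.RotorConfig q) :
    (G.rotorSet ρ).card = Fintype.card G.V - 1 := by
  rw [rotorSet, Finset.card_image_of_injective _ ρ.injective, Finset.card_univ,
    Fintype.card_subtype_compl, Fintype.card_subtype_eq]

lemma eq_of_mem_rotorSet {q : G.V} {ρ : G.RotorConfig q} {d d' : G.D} (hd : d ∈ G.rotorSet ρ)
    (hd' : d' ∈ G.rotorSet ρ) (h : G.tail d = G.tail d') : d = d' := by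
  obtain ⟨u, hu, rfl⟩ := mem_rotorSet.1 hd
  obtain ⟨u', hu', rfl⟩ := mem_rotorSet.1 hd'
  obtain rfl : u = u' := (ρ.2 u hu).symm.trans (h.trans (ρ.2 u' hu'))
  rfl

lemma TowardRoot.rotorSet_subset {q : G.V} {T : Finset G.D} {ρ : G.RotorConfig q}
    (hρ : G.TowardRoot q T ρ) : G.rotorSet ρ ⊆ T := fun _ hd => by
  obtain ⟨u, hu, rfl⟩ := mem_rotorSet.1 hd
  exact (hρ u hu).1

lemma TowardRoot.rev_notMem_rotorSet {q : G.V} {T : Finset G.D} {ρ : G.RotorConfig q}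
    (hρ : G.TowardRoot q T ρ) {d : G.D} (hd : d ∈ G.rotorSet ρ) : G.rev d ∉ G.rotorSet ρ := by
  obtain ⟨rank, hrank⟩ := hρ.exists_rank
  intro hrev
  obtain ⟨u, hu, rfl⟩ := mem_rotorSet.1 hd
  obtain ⟨u', hu', hu'd⟩ := mem_rotorSet.1 hrev
  have hhead : G.head (ρ.1 u hu) = u' := by rw [← ρ.2 u' hu', hu'd, tail_rev]
  have hhead' : G.head (ρ.1 u' hu') = u := by rw [hu'd, head_rev, ρ.2 u hu]
  have h1 : rank u' < rank u := hhead ▸ hrank u hu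
  have h2 : rank u < rank u' := hhead' ▸ hrank u' hu'
  omega

lemma TowardRoot.mem_rotorSet_iff {q : G.V} {T : Finset G.D} {ρ : G.RotorConfig q}
    (hρ : G.TowardRoot q T ρ) (hT : G.IsSpanningTree T) {d : G.D} (hd : d ∈ T) :
    d ∈ G.rotorSet ρ ↔ G.rev d ∉ G.rotorSet ρ := by
  refine ⟨hρ.rev_notMem_rotorSet, fun hrev => ?_⟩
  have hdisj : Disjoint (G.rotorSet ρ) ((G.rotorSet ρ).image G.rev) := by
    simp only [Finset.disjoint_left, Finset.mem_image]
    rintro _ h ⟨e, he, rfl⟩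
    exact hρ.rev_notMem_rotorSet he h
  have hunion : G.rotorSet ρ ∪ (G.rotorSet ρ).image G.rev = T := by
    refine Finset.eq_of_subset_of_card_le (Finset.union_subset hρ.rotorSet_subset ?_) ?_
    · simp only [Finset.image_subset_iff]
      exact fun e he => hT.1 e (hρ.rotorSet_subset he)
    · rw [Finset.card_union_of_disjoint hdisj,
        Finset.card_image_of_injective _ G.rev_invol.injective, card_rotorSet, hT.2.2]
      omega
  rw [← hunion, Finset.mem_union, Finset.mem_image] at hd
  obtain hd | ⟨e, he, rfl⟩ := hd
  · exact hd
  · exact absurd (by rwa [G.rev_invol]) hrev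

lemma not_exists_nonbacktracking_walk {T : Finset G.D} (hT : G.IsSpanningTree T) :
    ¬ ∃ e : ℕ → G.D, (∀ k, e k ∈ T) ∧ (∀ k, G.tail (e (k + 1)) = G.head (e k)) ∧
      ∀ k, e (k + 1) ≠ G.rev (e k) := by
  rintro ⟨e, heT, htail, hback⟩
  obtain ⟨ρ, hρ⟩ := exists_towardRoot fun u => hT.2.1 u (G.tail (e 0))
  obtain ⟨rank, hrank⟩ := hρ.exists_rank
  have rank_lt : ∀ d ∈ G.rotorSet ρ, rank (G.head d) < rank (G.tail d) := fun d hd => by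
    obtain ⟨u, hu, rfl⟩ := mem_rotorSet.1 hd
    rw [ρ.2 u hu]
    exact hrank u hu
  have up_or_down : ∀ k, e k ∈ G.rotorSet ρ ∨ G.rev (e k) ∈ G.rotorSet ρ := fun k => by
    have := hρ.mem_rotorSet_iff hT (heT k)
    tauto
  have down_persists : ∀ k, G.rev (e k) ∈ G.rotorSet ρ → G.rev (e (k + 1)) ∈ G.rotorSet ρ :=
    fun k hk => (up_or_down (k + 1)).resolve_left fun hup =>
      hback k (eq_of_mem_rotorSet hup hk (by rw [htail, tail_rev]))
  obtain ⟨k₀, hmono⟩ : ∃ k₀, StrictMono (fun k => rank (G.tail (e (k₀ + k)))) ∨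
      StrictAnti (fun k => rank (G.tail (e (k₀ + k)))) := by
    by_cases hdown : ∃ k₀, G.rev (e k₀) ∈ G.rotorSet ρ
    · obtain ⟨k₀, hk₀⟩ := hdown
      have hall : ∀ k, G.rev (e (k₀ + k)) ∈ G.rotorSet ρ := fun k =>
        Nat.rec hk₀ (fun k ih => down_persists _ ih) k
      refine ⟨k₀, Or.inl (strictMono_nat_of_lt_succ fun k => ?_)⟩
      simpa only [← add_assoc, htail, tail_rev, head_rev] using rank_lt _ (hall k)
    · refine ⟨0, Or.inr (strictAnti_nat_of_succ_lt fun k => ?_)⟩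
      simpa only [zero_add, htail] using
        rank_lt _ ((up_or_down k).resolve_right (not_exists.1 hdown k))
  have hinj : Function.Injective fun k => G.tail (e (k₀ + k)) :=
    hmono.elim (fun h => h.injective.of_comp) (fun h => h.injective.of_comp)
  exact not_injective_infinite_finite _ hinj

lemma exists_crossing_at_head (P : G.Faces → Prop) {d : G.D} (hr : ¬P (G.rightFace d))
    (hl : P (G.leftFace d)) :
    ∃ d', ¬P (G.rightFace d') ∧ P (G.leftFace d') ∧ G.tail d' = G.head d ∧ d' ≠ G.rev d := by
  -- turning around `head d` from `next (rev d)` to `rev d`, the left face leaves `P` somewhere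
  have hstart : P (G.leftFace (G.next (G.rev d))) ∧ G.tail (G.next (G.rev d)) = G.head d := by
    rw [leftFace_next, rightFace_rev, G.next_tail, tail_rev]
    exact ⟨hl, rfl⟩
  obtain ⟨x, _, rfl, ⟨hx, hxd⟩, hnext⟩ :=
    (reflTransGen_next (by rw [G.next_tail])).exists_exit (b := G.rev d)
      (P := fun x => P (G.leftFace x) ∧ G.tail x = G.head d) hstart (fun h => hr h.1)
  refine ⟨x, fun h => hnext ⟨by rwa [leftFace_next], by rw [G.next_tail, hxd]⟩, hx, hxd, ?_⟩
  rintro rfl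
  exact hr hx

lemma reflTransGen_dual_adj_of_tail_eq {x y : G.D} (h : G.tail x = G.tail y) :
    Relation.ReflTransGen G.dual.Adj (G.leftFace x) (G.leftFace y) :=
  (reflTransGen_next h).lift G.leftFace fun a _ hab =>
    ⟨G.rev a, rightFace_rev a, by rw [← hab, leftFace_next]; rfl⟩

lemma dual_connected (hconn : G.Connected) : G.dual.Connected := by
  have key : ∀ a b, Relation.ReflTransGen G.Adj a b → ∀ x y : G.D, G.tail x = a →
      G.tail y = b → Relation.ReflTransGen G.dual.Adj (G.leftFace x) (G.leftFace y) := by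
    intro a b hab
    induction hab using Relation.ReflTransGen.head_induction_on with
    | refl => exact fun x y hx hy => reflTransGen_dual_adj_of_tail_eq (hx.trans hy.symm)
    | head hac _ ih =>
      obtain ⟨d, rfl, rfl⟩ := hac
      intro x y hx hy
      refine ((reflTransGen_dual_adj_of_tail_eq hx).tail ?_).trans (ih (G.rev d) y (tail_rev d) hy)
      exact ⟨G.rev d, rightFace_rev d, rfl⟩
  intro f g
  exact Quotient.inductionOn₂ f g fun x y => key _ _ (hconn _ _) x y rfl rfl

lemma reflTransGen_dual_treeAdj_compl (hconn : G.Connected) {T : Finset G.D}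
    (hT : G.IsSpanningTree T) (f w : G.dual.V) :
    Relation.ReflTransGen (G.dual.treeAdj Tᶜ) f w := by
  by_contra hf
  set P : G.Faces → Prop := fun g => Relation.ReflTransGen (G.dual.treeAdj Tᶜ) g w
  have crossing_mem : ∀ d : G.D, ¬P (G.rightFace d) → P (G.leftFace d) → d ∈ T :=
    fun d hr hl => by_contra fun hd => hr (.head ⟨d, Finset.mem_compl.2 hd, rfl, rfl⟩ hl)
  obtain ⟨_, _, ⟨d₀, rfl, rfl⟩, hr₀, hl₀⟩ :=
    (dual_connected hconn f w).exists_exit (P := fun g => ¬P g) hf (not_not.2 .refl)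
  let Crossing := {d : G.D // ¬P (G.rightFace d) ∧ P (G.leftFace d)}
  have hsucc : ∀ c : Crossing, ∃ c' : Crossing, G.tail c'.1 = G.head c.1 ∧ c'.1 ≠ G.rev c.1 :=
    fun c => by
      obtain ⟨d', hr, hl, htail, hne⟩ := exists_crossing_at_head P c.2.1 c.2.2
      exact ⟨⟨d', hr, hl⟩, htail, hne⟩
  choose succ hsucc using hsucc
  let walk : ℕ → Crossing := fun k => succ^[k] ⟨d₀, hr₀, not_not.1 hl₀⟩
  refine not_exists_nonbacktracking_walk hT ⟨fun k => (walk k).1,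
    fun k => crossing_mem _ (walk k).2.1 (walk k).2.2, fun k => ?_, fun k => ?_⟩
  · simpa only [walk, Function.iterate_succ_apply'] using (hsucc (walk k)).1
  · simpa only [walk, Function.iterate_succ_apply'] using (hsucc (walk k)).2

lemma card_compl_of_isSpanningTree [Nonempty G.V] (hplanar : G.IsPlanar) {T : Finset G.D}
    (hT : G.IsSpanningTree T) : Tᶜ.card = 2 * (Fintype.card G.dual.V - 1) := by
  obtain ⟨m, hm⟩ := G.rev_invol.even_card G.rev_ne
  have hplanar' : Fintype.card G.V + Fintype.card G.dual.V = Fintype.card G.D / 2 + 2 := hplanar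
  have := T.card_le_univ
  have := Fintype.card_pos (α := G.V)
  rw [T.card_compl, hT.2.2]
  omega

lemma isSpanningTree_dual_compl [Nonempty G.V] (hconn : G.Connected) (hplanar : G.IsPlanar)
    {T : Finset G.D} (hT : G.IsSpanningTree T) : G.dual.IsSpanningTree Tᶜ := by
  refine ⟨fun d hd => ?_, reflTransGen_dual_treeAdj_compl hconn hT,
    card_compl_of_isSpanningTree hplanar hT⟩
  exact Finset.mem_compl.2 fun h => Finset.mem_compl.1 hd (G.rev_invol d ▸ hT.1 _ h)

section Duality

variable {v : G.V} {w : G.dual.V} {T : Finset G.D} {ρ : G.RotorConfig v}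
  {σ : G.dual.RotorConfig w}

lemma sum_rotorSet_union {M : Type*} [AddCommMonoid M] (hρ : G.TowardRoot v T ρ)
    (hσ : G.dual.TowardRoot w Tᶜ σ) (f : G.D → M) :
    ∑ d ∈ G.rotorSet ρ ∪ G.dual.rotorSet σ, f d =
      ∑ u : {u // u ≠ v}, f (ρ.1 u u.2) + ∑ g : {g // g ≠ w}, f (σ.1 g g.2) :=
  (Finset.sum_union (Finset.disjoint_left.2 fun _ hdρ hdσ =>
    Finset.mem_compl.1 (hσ.rotorSet_subset hdσ) (hρ.rotorSet_subset hdρ))).trans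
    (congrArg₂ (· + ·) (sum_rotorSet ρ f) (sum_rotorSet (G := G.dual) σ f))

lemma mem_rotorSet_union_iff (hT : G.IsSpanningTree T) (hTd : G.dual.IsSpanningTree Tᶜ)
    (hρ : G.TowardRoot v T ρ) (hσ : G.dual.TowardRoot w Tᶜ σ) (d : G.D) :
    d ∈ G.rotorSet ρ ∪ G.dual.rotorSet σ ↔ G.rev d ∉ G.rotorSet ρ ∪ G.dual.rotorSet σ := by
  have hσ_compl : ∀ e ∈ T, e ∉ G.dual.rotorSet σ := fun e he h =>
    Finset.mem_compl.1 (hσ.rotorSet_subset h) he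
  have hρ_sub : ∀ e ∉ T, e ∉ G.rotorSet ρ := fun e he h => he (hρ.rotorSet_subset h)
  have hunion : ∀ e, e ∈ G.rotorSet ρ ∪ G.dual.rotorSet σ ↔
      e ∈ G.rotorSet ρ ∨ e ∈ G.dual.rotorSet σ := fun e => Finset.mem_union
  refine (hunion d).trans (Iff.trans ?_ (not_congr (hunion _)).symm)
  by_cases hd : d ∈ T
  · have := hρ.mem_rotorSet_iff hT hd
    have := hσ_compl d hd
    have := hσ_compl _ (hT.1 d hd)
    tauto
  · have hrd : G.rev d ∉ T := fun h => hd (G.rev_invol d ▸ hT.1 _ h)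
    have := hσ.mem_rotorSet_iff hTd (Finset.mem_compl.2 hd)
    have := hρ_sub d hd
    have := hρ_sub _ hrd
    tauto

lemma sum_unitClass_rightFace_eq (φ : G.Jac ≃+ G.dual.Jac)
    (hφ : ∀ d : G.D, φ (G.dartBoundary d) = G.dual.dartBoundary d)
    {T' : Finset G.D} {ρ' : G.RotorConfig v} {σ' : G.dual.RotorConfig w}
    (hT : G.IsSpanningTree T) (hTd : G.dual.IsSpanningTree Tᶜ)
    (hT' : G.IsSpanningTree T') (hT'd : G.dual.IsSpanningTree T'ᶜ)
    (hρ : G.TowardRoot v T ρ) (hσ : G.dual.TowardRoot w Tᶜ σ)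
    (hρ' : G.TowardRoot v T' ρ') (hσ' : G.dual.TowardRoot w T'ᶜ σ') :
    ∑ u : {u // u ≠ v}, G.dual.unitClass (G.rightFace (ρ.1 u u.2)) (G.rightFace (ρ'.1 u u.2)) =
      φ (∑ f : {f // f ≠ w}, G.unitClass (G.tail (σ.1 f f.2)) (G.tail (σ'.1 f f.2))) := by
  let μ : G.D → G.dual.Jac := fun d =>
    G.dual.unitClass (G.rightFace d) w - φ (G.unitClass (G.tail d) v)
  have hμ : ∀ d, μ (G.rev d) = μ d := fun d => by
    have hdual : G.dual.unitClass (G.leftFace d) w - G.dual.unitClass (G.rightFace d) w =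
        G.dual.dartBoundary d := unitClass_sub_unitClass (G := G.dual.toMultigraph) _ _ _
    have hprimal : φ (G.unitClass (G.head d) v) - φ (G.unitClass (G.tail d) v) =
        φ (G.dartBoundary d) := by rw [← map_sub, unitClass_sub_unitClass]; rfl
    simp only [μ, rightFace_rev, tail_rev]
    rw [sub_eq_sub_iff_sub_eq_sub]
    exact hdual.trans ((hφ d).symm.trans hprimal.symm)
  have hsum := G.rev_invol.sum_transversal_eq hμ (mem_rotorSet_union_iff hT hTd hρ hσ)
    (mem_rotorSet_union_iff hT' hT'd hρ' hσ')
  rw [sum_rotorSet_union hρ hσ, sum_rotorSet_union hρ' hσ'] at hsum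
  have hρ_term : ∀ u : {u // u ≠ v}, G.dual.unitClass (G.rightFace (ρ.1 u u.2))
      (G.rightFace (ρ'.1 u u.2)) = μ (ρ.1 u u.2) - μ (ρ'.1 u u.2) := fun u => by
    simp only [μ, ρ.2, ρ'.2, sub_sub_sub_cancel_right]
    exact (unitClass_sub_unitClass (G := G.dual.toMultigraph) _ _ _).symm
  have hσ_term : ∀ f : {f // f ≠ w}, φ (G.unitClass (G.tail (σ.1 f f.2)) (G.tail (σ'.1 f f.2))) =
      μ (σ'.1 f f.2) - μ (σ.1 f f.2) := fun f => by
    have hσf : G.rightFace (σ.1 f f.2) = f.1 := σ.2 f f.2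
    have hσ'f : G.rightFace (σ'.1 f f.2) = f.1 := σ'.2 f f.2
    simp only [μ, hσf, hσ'f, sub_sub_sub_cancel_left, ← map_sub, unitClass_sub_unitClass]
  clear_value μ
  rw [Finset.sum_congr rfl fun u _ => hρ_term u, map_sum, Finset.sum_congr rfl fun f _ => hσ_term f,
    Finset.sum_sub_distrib, Finset.sum_sub_distrib, sub_eq_sub_iff_add_eq_add, hsum, add_comm]

end Duality

end RibbonGraph

open RibbonGraph in
theorem dual_of_tree_angle_general (G : RibbonGraph)
    (hconn : G.Connected) (hplanar : G.IsPlanar)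
    (φ : G.Jac ≃+ G.dual.Jac)
    (hφ : ∀ d : G.D, φ (G.dartBoundary d) = G.dual.dartBoundary d)
    (T T' : Finset G.D) (hT : G.IsSpanningTree T) (hT' : G.IsSpanningTree T')
    (v : G.V) (w : G.dual.V) :
    φ (G.treeAngle v T T') = G.dual.treeAngle w Tᶜ T'ᶜ := by
  have : Nonempty G.V := ⟨v⟩
  have hTd := isSpanningTree_dual_compl hconn hplanar hT
  have hT'd := isSpanningTree_dual_compl hconn hplanar hT'
  obtain ⟨ρ, ρ', hρ, hρ', hangle⟩ := exists_treeAngle_eq_sum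
    (exists_towardRoot fun u => hT.2.1 u v) (exists_towardRoot fun u => hT'.2.1 u v)
  obtain ⟨σ, σ', hσ, hσ', hangle_dual⟩ := exists_treeAngle_eq_sum (G := G.dual)
    (exists_towardRoot fun f => hTd.2.1 f w) (exists_towardRoot fun f => hT'd.2.1 f w)
  rw [hangle, hangle_dual, map_sum]
  refine (Finset.sum_congr rfl fun u _ =>
    map_dartAngle_eq_unitClass_rightFace φ hφ (by rw [ρ.2, ρ'.2])).trans ?_
  refine (sum_unitClass_rightFace_eq φ hφ hT hTd hT' hT'd hρ hσ hρ' hσ').trans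
    ((map_sum _ _ _).trans ?_)
  exact Finset.sum_congr rfl fun f _ =>
    (dual_dartAngle_eq_map_unitClass_tail φ hφ (by rw [σ.2, σ'.2])).symm

/-- For a planar ribbon graph `G` with `G`, `G*` loopless and
spanning trees `T`, `T'` of `G`, `φ(∠(T,T')) = ∠(T*, T'*)`, the angles being
computed at arbitrary root vertices (they are root-independent in the planar
case). -/
theorem dual_of_tree_angle (G : RibbonGraph)
    (hconn : G.Connected) (hloop : G.Loopless) (hplanar : G.IsPlanar)
    (hdualloop : G.dual.Loopless)
    (φ : G.Jac ≃+ G.dual.Jac)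
    (hφ : ∀ d : G.D, φ (G.dartBoundary d) = G.dual.dartBoundary d)
    (T T' : Finset G.D) (hT : G.IsSpanningTree T) (hT' : G.IsSpanningTree T')
    (v : G.V) (w : G.dual.V) :
    φ (G.treeAngle v T T') = G.dual.treeAngle w Tᶜ T'ᶜ :=
  dual_of_tree_angle_general G hconn hplanar φ hφ T T' hT hT' v w
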